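/- Let n be a positive even integer. For any complete oriented flags F_0,…,F_{n+1} in ℝⁿ, the coboundary of coco vanishes: ∑_{i=0}^{n+1} (−1)^i coco(F_0,…,F̂_i,…,F_{n+1}) = 0. -/

import Mathlib

noncomputable section

/-- Sign of the determinant of the matrix whose columns are `v 0, …, v (n-1)`. -/
def oriV {n : ℕ} (v : Fin n → (Fin n → ℝ)) : ℝ :=
  Real.sign (Matrix.det (Matrix.of fun i j => v j i))

open Classical in
/-- We represent a complete oriented flag `F` in `ℝⁿ` by a basis `(F 0, …, F (n-1))`:
the flag is `Fⁱ = span(F 0, …, F (i-1))`, oriented by this basis, with the positive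
half-space `(Fⁱ)⁺` the one containing `F (i-1)`.  Two bases represent the same
oriented flag iff the transition matrix is upper triangular with positive diagonal.

Given a tuple `W` representing an oriented subspace `⟨W 0, …, W (k-1)⟩` and a flag `F`,
`extVec W F` is the first vector `F d` of the flag not contained in `span W`; it is a
vector of the positive half-space `(F^{d+1})⁺`, so `snoc W (extVec W F)` represents the
oriented subspace `[⟨W⟩, F]` of Bucher–Monod. -/
def extVec {n k : ℕ} (W : Fin k → (Fin n → ℝ)) (F : Fin n → (Fin n → ℝ)) : Fin n → ℝ :=
  if h : ∃ j, F j ∉ Submodule.span ℝ (Set.range W) then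
    F (Fin.find (fun j => F j ∉ Submodule.span ℝ (Set.range W)) h)
  else 0

/-- `bracket (F_1, …, F_k)` is (the canonical representing tuple of) the oriented
`k`-dimensional subspace `[F_1, …, F_k]`, defined inductively by `[F_1] = F_1¹` and
`[F_1,…,F_k] = [[F_1,…,F_{k-1}], F_k]`. -/
def bracket {n : ℕ} : {k : ℕ} → (Fin k → (Fin n → (Fin n → ℝ))) → (Fin k → (Fin n → ℝ))
  | 0, _ => Fin.elim0
  | (_ + 1), Fs =>
      Fin.snoc (bracket (Fs ∘ Fin.castSucc))
        (extVec (bracket (Fs ∘ Fin.castSucc)) (Fs (Fin.last _)))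

/-- `coco(F_0,…,F_n) = ∏_{i=0}^{n} ori([F_0,…,F̂_i,…,F_n])`. -/
def coco {n : ℕ} (Fs : Fin (n + 1) → (Fin n → (Fin n → ℝ))) : ℝ :=
  ∏ i : Fin (n + 1), oriV (bracket (Fs ∘ i.succAbove))

/-!
Perturb the basis `(F_t a)ₐ` of each flag to `u_t = ∑ₐ ε ^ (a c_t) • F_t a`, with weights `c_t`
decreasing so fast that, in the expansion of a maximal minor of the `u_t` as a polynomial in `ε`,
the term of lowest order is the greedy transversal that defines the iterated bracket. For small
`ε > 0` every factor of `coco` is then the sign of a maximal minor of one configuration of `n + 2`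
vectors in general position in `ℝⁿ`.

For such a configuration, Gale duality writes the signed minors as `(-1)^i c · wedge (p i) (p k)`
for vectors `p k` of the plane, and the alternating sum becomes, up to a global sign,
`∑ᵢ ∏_{k ≠ i} sign (wedge (p i) (p k))`. This vanishes for an even number of pairwise independent
vectors: once they are flipped into a half plane, the `i`-th product is `(-1)` to the power of the
rank of `p i` in the angular order.
-/

open Finset

theorem Real.sign_eq_coe_sign (x : ℝ) : Real.sign x = (SignType.sign x : ℝ) := by
  rcases lt_trichotomy x 0 with h | h | h
  · simp [Real.sign_of_neg h, h]
  · simp [h]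
  · simp [Real.sign_of_pos h, h]

theorem Real.sign_mul (x y : ℝ) : Real.sign (x * y) = Real.sign x * Real.sign y := by
  simp only [Real.sign_eq_coe_sign, _root_.sign_mul, SignType.coe_mul]

theorem Real.sign_neg_one_pow (k : ℕ) : Real.sign ((-1) ^ k) = (-1) ^ k := by
  simp [Real.sign_eq_coe_sign, sign_pow]

theorem Real.sign_pow_of_even {x : ℝ} (hx : x ≠ 0) {k : ℕ} (hk : Even k) :
    Real.sign x ^ k = 1 := by
  rcases Real.sign_apply_eq_of_ne_zero x hx with h | h <;> simp [h, hk.neg_one_pow]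

lemma oriV_eq_sign_det {n : ℕ} (y : Fin n → Fin n → ℝ) : oriV y = Real.sign (Matrix.of y).det := by
  rw [oriV, ← Matrix.det_transpose]; rfl

lemma linearIndependent_iff_det_ne_zero {n : ℕ} (y : Fin n → Fin n → ℝ) :
    LinearIndependent ℝ y ↔ (Matrix.of y).det ≠ 0 := by
  rw [← isUnit_iff_ne_zero, ← Matrix.isUnit_iff_isUnit_det,
    ← Matrix.linearIndependent_rows_iff_isUnit]
  rfl

lemma det_of_sum_smul {R ι κ : Type*} [CommRing R] [Fintype ι] [DecidableEq ι] [Fintype κ]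
    (e : ι → κ → R) (H : ι → κ → ι → R) :
    (Matrix.of fun k => ∑ a, e k a • H k a).det =
      ∑ f : ι → κ, (∏ k, e k (f k)) * (Matrix.of fun k => H k (f k)).det := by
  let D := (Matrix.detRowAlternating (R := R) (n := ι)).toMultilinearMap
  have hsum := D.map_sum fun k a => e k a • H k a
  have hsmul := fun f : ι → κ => D.map_smul_univ (fun k => e k (f k)) (fun k => H k (f k))
  simp only [smul_eq_mul] at hsum hsmul
  exact hsum.trans (sum_congr rfl fun f _ => hsmul f)

/-- Laplace expansion along the first column of the matrix with rows `(w j r, w j)`, whose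
columns `0` and `r + 1` coincide. -/
lemma sum_neg_one_pow_mul_det_smul_eq_zero {n : ℕ} (w : Fin (n + 1) → Fin n → ℝ) :
    ∑ j : Fin (n + 1), ((-1 : ℝ) ^ (j : ℕ) * (Matrix.of (w ∘ j.succAbove)).det) • w j = 0 := by
  ext r
  let B : Matrix (Fin (n + 1)) (Fin (n + 1)) ℝ := Matrix.of fun j => Fin.cons (w j r) (w j)
  have hB : B.det = 0 :=
    Matrix.det_zero_of_column_eq (Fin.succ_ne_zero r).symm fun k => by simp [B]
  have hminor : ∀ j : Fin (n + 1),
      B.submatrix j.succAbove Fin.succ = Matrix.of (w ∘ j.succAbove) := by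
    intro j; ext a b; simp [B]
  rw [Matrix.det_succ_column_zero] at hB
  simpa [hminor, B, mul_comm, mul_assoc] using hB

def wedge (a b : ℝ × ℝ) : ℝ := a.1 * b.2 - a.2 * b.1

lemma wedge_self (a : ℝ × ℝ) : wedge a a = 0 := by
  unfold wedge; ring

lemma wedge_swap (a b : ℝ × ℝ) : wedge b a = -wedge a b := by
  unfold wedge; ring

lemma wedge_smul_smul (s t : ℝ) (a b : ℝ × ℝ) : wedge (s • a) (t • b) = s * t * wedge a b := by
  simp only [wedge, Prod.smul_fst, Prod.smul_snd, smul_eq_mul]; ring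

/-- In the closed upper half plane, the `y`-coordinate of the identity
`[u,w] v = [v,w] u + [u,v] w` rules out `[u,w] < 0`. -/
lemma wedge_pos_trans {u v w : ℝ × ℝ} (hu : 0 ≤ u.2) (hv : 0 ≤ v.2) (hw : 0 ≤ w.2)
    (huv : 0 < wedge u v) (hvw : 0 < wedge v w) (huw : wedge u w ≠ 0) : 0 < wedge u w := by
  have hcramer : wedge u w * v.2 = wedge v w * u.2 + wedge u v * w.2 := by unfold wedge; ring
  refine huw.lt_or_gt.resolve_left fun hneg => huw ?_
  have hu0 : u.2 = 0 := by nlinarith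
  have hw0 : w.2 = 0 := by nlinarith
  simp [wedge, hu0, hw0]

lemma sum_comp_eq_sum_range_of_injective {N : ℕ} {M : Type*} [AddCommMonoid M] (r : Fin N → ℕ)
    (hr : Function.Injective r) (hlt : ∀ i, r i < N) (f : ℕ → M) :
    ∑ i, f (r i) = ∑ m ∈ range N, f m := by
  let e : Fin N → Fin N := fun i => ⟨r i, hlt i⟩
  have he : Function.Injective e := fun i k h => hr (Fin.val_eq_of_eq h)
  rw [← Fin.sum_univ_eq_sum_range]
  exact Fintype.sum_bijective e (Finite.injective_iff_bijective.mp he) _ _ fun i => rfl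

lemma prod_sign_wedge_succAbove {N : ℕ} (q : Fin (N + 1) → ℝ × ℝ)
    (hq : ∀ i k, i ≠ k → wedge (q i) (q k) ≠ 0) (i : Fin (N + 1)) :
    ∏ j, Real.sign (wedge (q i) (q (i.succAbove j))) = (-1) ^ #{k | 0 < wedge (q k) (q i)} := by
  let f : Fin (N + 1) → ℝ := fun k => if 0 < wedge (q k) (q i) then -1 else 1
  have hf : ∀ j, Real.sign (wedge (q i) (q (i.succAbove j))) = f (i.succAbove j) := by
    intro j
    have hne := hq i _ (Fin.succAbove_ne i j).symm
    rw [← neg_neg (wedge (q i) _), ← wedge_swap] at hne ⊢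
    rcases (neg_ne_zero.mp hne).lt_or_gt with h | h
    · simp [f, h, h.not_gt, Real.sign_of_pos]
    · simp [f, h, Real.sign_of_neg]
  calc ∏ j, Real.sign (wedge (q i) (q (i.succAbove j)))
      = f i * ∏ j, f (i.succAbove j) := by simp [hf, f, wedge_self]
    _ = (-1) ^ #{k | 0 < wedge (q k) (q i)} := by
      rw [← Fin.prod_univ_succAbove, prod_ite]
      simp

lemma sum_prod_sign_wedge_eq_zero_of_snd_nonneg {N : ℕ} (hN : Even (N + 1))
    (q : Fin (N + 1) → ℝ × ℝ) (hq_up : ∀ i, 0 ≤ (q i).2)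
    (hq : ∀ i k, i ≠ k → wedge (q i) (q k) ≠ 0) :
    ∑ i, ∏ j, Real.sign (wedge (q i) (q (i.succAbove j))) = 0 := by
  let rank : Fin (N + 1) → ℕ := fun i => #{k | 0 < wedge (q k) (q i)}
  have hrank_lt : ∀ i k, 0 < wedge (q i) (q k) → rank i < rank k := by
    intro i k hik
    refine card_lt_card ((ssubset_iff_of_subset fun l hl => ?_).mpr ⟨i, ?_, ?_⟩)
    · have hli : 0 < wedge (q l) (q i) := (mem_filter.mp hl).2
      have hlk : l ≠ k := by rintro rfl; linarith [wedge_swap (q i) (q l)]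
      simpa using wedge_pos_trans (hq_up l) (hq_up i) (hq_up k) hli hik (hq l k hlk)
    · simpa using hik
    · simp [wedge_self]
  have hrank_inj : Function.Injective rank := by
    intro i k h
    by_contra hne
    rcases (hq i k hne).lt_or_gt with hik | hik
    · have := hrank_lt k i (by linarith [wedge_swap (q i) (q k)])
      omega
    · have := hrank_lt i k hik
      omega
  have hrank_le : ∀ i, rank i < N + 1 := fun i => by
    simpa using card_lt_card (filter_ssubset.mpr ⟨i, mem_univ i, by simp [wedge_self]⟩)
  rw [sum_congr rfl fun i _ => prod_sign_wedge_succAbove q hq i,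
    sum_comp_eq_sum_range_of_injective rank hrank_inj hrank_le, neg_one_geom_sum, if_pos hN]

/-- Flipping vectors into the upper half plane multiplies every summand by the same sign, since
each flip changes the sign of `N + 1` factors in total, an even number. -/
lemma sum_prod_sign_wedge_eq_zero {N : ℕ} (hN : Even (N + 1)) (p : Fin (N + 1) → ℝ × ℝ)
    (hp : ∀ i k, i ≠ k → wedge (p i) (p k) ≠ 0) :
    ∑ i, ∏ j, Real.sign (wedge (p i) (p (i.succAbove j))) = 0 := by
  have hflip : ∀ i, ∃ s : ℝ, (s = 1 ∨ s = -1) ∧ 0 ≤ (s • p i).2 := fun i =>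
    (le_total 0 (p i).2).elim (fun h => ⟨1, Or.inl rfl, by simpa⟩)
      (fun h => ⟨-1, Or.inr rfl, by simpa⟩)
  choose σ hσ hup using hflip
  have hσσ : ∀ i, σ i * σ i = 1 := fun i => by rcases hσ i with h | h <;> simp [h]
  have hwedge : ∀ i k, wedge (p i) (p k) = σ i * σ k * wedge (σ i • p i) (σ k • p k) := by
    intro i k
    rw [wedge_smul_smul]
    linear_combination (-(σ k * σ k) * wedge (p i) (p k)) * hσσ i - wedge (p i) (p k) * hσσ k
  have hodd : Odd N := by simpa [Nat.even_add_one] using hN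
  have hσpow : ∀ i, σ i ^ N = σ i := fun i => by
    rcases hσ i with h | h <;> simp [h, hodd.neg_one_pow]
  have hsign : ∀ i, Real.sign (σ i) = σ i := fun i => by
    rcases hσ i with h | h <;> simp [h, Real.sign_neg]
  have hterm : ∀ i, ∏ j, Real.sign (wedge (p i) (p (i.succAbove j))) =
      (∏ k, σ k) * ∏ j, Real.sign (wedge (σ i • p i) (σ (i.succAbove j) • p (i.succAbove j))) := by
    intro i
    simp only [hwedge i, Real.sign_mul, hsign, prod_mul_distrib, prod_const,
      card_univ, Fintype.card_fin, hσpow, ← Fin.prod_univ_succAbove]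
  rw [sum_congr rfl fun i _ => hterm i, ← mul_sum,
    sum_prod_sign_wedge_eq_zero_of_snd_nonneg hN _ hup, mul_zero]
  intro i k hik h
  exact hp i k hik (by rw [hwedge, h, mul_zero])

lemma Fin.val_add_val_predAbove {m : ℕ} (i : Fin (m + 2)) (j : Fin (m + 1)) :
    (j : ℕ) + (j.predAbove i : ℕ) + 1 = i + i.succAbove j := by
  unfold Fin.succAbove Fin.predAbove
  split_ifs <;> simp_all <;> omega

def InGeneralPosition {n : ℕ} (u : Fin (n + 2) → Fin n → ℝ) : Prop :=
  ∀ (i : Fin (n + 2)) (j : Fin (n + 1)), (Matrix.of (u ∘ i.succAbove ∘ j.succAbove)).det ≠ 0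

def circuit {n : ℕ} (u : Fin (n + 2) → Fin n → ℝ) (i : Fin (n + 2)) : Fin (n + 2) → ℝ :=
  Fin.insertNth i 0 fun j => (-1) ^ (j : ℕ) * (Matrix.of (u ∘ i.succAbove ∘ j.succAbove)).det

section circuit

variable {n : ℕ} (u : Fin (n + 2) → Fin n → ℝ)

@[simp] lemma circuit_self (i : Fin (n + 2)) : circuit u i i = 0 :=
  Fin.insertNth_apply_same _ _ _

lemma circuit_succAbove (i : Fin (n + 2)) (j : Fin (n + 1)) :
    circuit u i (i.succAbove j) =
      (-1) ^ (j : ℕ) * (Matrix.of (u ∘ i.succAbove ∘ j.succAbove)).det :=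
  Fin.insertNth_apply_succAbove _ _ _ _

lemma sum_circuit_smul (i : Fin (n + 2)) : ∑ k, circuit u i k • u k = 0 := by
  rw [Fin.sum_univ_succAbove _ i, circuit_self, zero_smul, zero_add]
  simp only [circuit_succAbove]
  exact sum_neg_one_pow_mul_det_smul_eq_zero (u ∘ i.succAbove)

lemma circuit_ne_zero (hu : InGeneralPosition u) {i k : Fin (n + 2)} (hik : i ≠ k) :
    circuit u i k ≠ 0 := by
  obtain ⟨j, rfl⟩ := Fin.exists_succAbove_eq hik.symm
  rw [circuit_succAbove]
  exact mul_ne_zero (pow_ne_zero _ (by norm_num)) (hu i j)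

/-- Both circuits are, up to sign, the same maximal minor: removing `i` then `k` or `k` then `i`
leaves the same ordered family. -/
lemma neg_one_pow_mul_circuit_swap (i k : Fin (n + 2)) :
    (-1) ^ (i : ℕ) * circuit u i k = -((-1) ^ (k : ℕ) * circuit u k i) := by
  rcases eq_or_ne i k with rfl | hik
  · simp
  obtain ⟨j, rfl⟩ := Fin.exists_succAbove_eq hik.symm
  have hback : circuit u (i.succAbove j) i =
      (-1) ^ (j.predAbove i : ℕ) * (Matrix.of (u ∘ i.succAbove ∘ j.succAbove)).det := by
    have h := circuit_succAbove u (i.succAbove j) (j.predAbove i)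
    rw [Fin.succAbove_succAbove_predAbove] at h
    rw [h]
    congr 3
    funext l
    simp [Fin.succAbove_succAbove_succAbove_predAbove]
  have hpar : (-1 : ℝ) ^ (i : ℕ) * (-1) ^ (j : ℕ) =
      -((-1) ^ (i.succAbove j : ℕ) * (-1) ^ (j.predAbove i : ℕ)) := by
    have hsum := Fin.val_add_val_predAbove i j
    rw [← pow_add, ← pow_add, neg_one_pow_eq_pow_mod_two, neg_one_pow_eq_pow_mod_two (_ + _)]
    rcases Nat.mod_two_eq_zero_or_one ((i.succAbove j : ℕ) + j.predAbove i) with h | h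
    · rw [h, show ((i : ℕ) + j) % 2 = 1 by omega]; norm_num
    · rw [h, show ((i : ℕ) + j) % 2 = 0 by omega]; norm_num
  rw [circuit_succAbove, hback, ← mul_assoc, hpar]
  ring

end circuit

lemma eq_zero_of_sum_smul_eq_zero {R V : Type*} [Ring R] [AddCommGroup V] [Module R V] {n : ℕ}
    {v : Fin (n + 2) → V} (hv : LinearIndependent R fun l : Fin n => v l.succ.succ)
    {z : Fin (n + 2) → R} (hz : ∑ k, z k • v k = 0) (h0 : z 0 = 0) (h1 : z 1 = 0) : z = 0 := by
  rw [Fin.sum_univ_succ, Fin.sum_univ_succ, h0, Fin.succ_zero_eq_one, h1] at hz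
  simp only [zero_smul, zero_add] at hz
  have hzero := Fintype.linearIndependent_iff.mp hv _ hz
  funext k
  induction k using Fin.cases with
  | zero => exact h0
  | succ k =>
    induction k using Fin.cases with
    | zero => exact h1
    | succ l => exact hzero l

lemma exists_mul_wedge_eq {p : ℝ × ℝ} (hp : p ≠ 0) {a b : ℝ} (h : a * p.1 + b * p.2 = 0) :
    ∃ κ, ∀ x : ℝ × ℝ, a * x.1 + b * x.2 = κ * wedge p x := by
  have hs : p.1 ^ 2 + p.2 ^ 2 ≠ 0 := fun h =>
    hp (Prod.ext_iff.mpr (mul_self_add_mul_self_eq_zero.mp (by simpa [sq] using h)))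
  refine ⟨(b * p.1 - a * p.2) / (p.1 ^ 2 + p.2 ^ 2), fun x => ?_⟩
  field_simp
  unfold wedge
  linear_combination (x.1 * p.1 + x.2 * p.2) * h

/-- Gale duality for `n + 2` vectors in general position in `ℝⁿ`: their relations form a plane,
in which the circuits `circuit u i` are proportional to the functionals `wedge (p i)`. -/
theorem exists_circuit_eq_wedge {n : ℕ} (u : Fin (n + 2) → Fin n → ℝ)
    (hu : InGeneralPosition u) :
    ∃ (c : ℝ) (p : Fin (n + 2) → ℝ × ℝ),
      ∀ i k, circuit u i k = (-1) ^ (i : ℕ) * c * wedge (p i) (p k) := by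
  have hne := fun {i k : Fin (n + 2)} (hik : i ≠ k) => circuit_ne_zero u hu hik
  have h01 : (0 : Fin (n + 2)) ≠ 1 := by simp
  have hind : LinearIndependent ℝ fun l : Fin n => u l.succ.succ := by
    simpa [Function.comp_def] using (linearIndependent_iff_det_ne_zero _).mpr (hu 0 0)
  let p : Fin (n + 2) → ℝ × ℝ := fun k => (circuit u 0 k, circuit u 1 k)
  have hplane : ∀ i, ∃ a b : ℝ, ∀ k, circuit u i k = a * (p k).1 + b * (p k).2 := by
    intro i
    refine ⟨circuit u i 1 / circuit u 0 1, circuit u i 0 / circuit u 1 0, fun k => ?_⟩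
    have hz := eq_zero_of_sum_smul_eq_zero hind
      (z := circuit u i - (circuit u i 1 / circuit u 0 1) • circuit u 0 -
        (circuit u i 0 / circuit u 1 0) • circuit u 1)
      (by simp [sub_smul, sum_sub_distrib, mul_smul, ← smul_sum, sum_circuit_smul])
      (by simp [div_mul_cancel₀ _ (hne h01.symm)])
      (by simp [div_mul_cancel₀ _ (hne h01)])
    simpa [sub_eq_zero, sub_sub] using congrFun hz k
  have hp0 : ∀ i, p i ≠ 0 := by
    intro i hi
    rcases eq_or_ne i 0 with rfl | hi0
    · exact hne h01.symm (congrArg Prod.snd hi)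
    · exact hne hi0.symm (congrArg Prod.fst hi)
  have hwedge : ∀ i, ∃ κ, ∀ k, circuit u i k = κ * wedge (p i) (p k) := by
    intro i
    obtain ⟨a, b, hab⟩ := hplane i
    obtain ⟨κ, hκ⟩ := exists_mul_wedge_eq (hp0 i) (by rw [← hab, circuit_self])
    exact ⟨κ, fun k => (hab k).trans (hκ (p k))⟩
  choose κ hκ using hwedge
  refine ⟨κ 0, p, fun i k => ?_⟩
  suffices κ i = (-1) ^ (i : ℕ) * κ 0 by rw [hκ, this]
  rcases eq_or_ne i 0 with rfl | hi0
  · simp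
  have hw : wedge (p 0) (p i) ≠ 0 := fun h => hne hi0.symm (by rw [hκ, h, mul_zero])
  have hswap := neg_one_pow_mul_circuit_swap u i 0
  rw [hκ, hκ, wedge_swap (p 0)] at hswap
  simp only [Fin.val_zero, pow_zero, one_mul] at hswap
  have hsq : ((-1 : ℝ) ^ (i : ℕ)) ^ 2 = 1 := sq_eq_one_iff.mpr (neg_one_pow_eq_or ℝ _)
  apply mul_right_cancel₀ hw
  linear_combination -(-1) ^ (i : ℕ) * hswap - κ i * wedge (p 0) (p i) * hsq

theorem sum_neg_one_pow_mul_prod_sign_det_eq_zero {n : ℕ} (hn : Even n)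
    (u : Fin (n + 2) → Fin n → ℝ)
    (hu : InGeneralPosition u) :
    ∑ i : Fin (n + 2), (-1 : ℝ) ^ (i : ℕ) *
      ∏ j : Fin (n + 1), Real.sign (Matrix.of (u ∘ i.succAbove ∘ j.succAbove)).det = 0 := by
  obtain ⟨c, p, hcp⟩ := exists_circuit_eq_wedge u hu
  have hne : ∀ {i k : Fin (n + 2)}, i ≠ k → c ≠ 0 ∧ wedge (p i) (p k) ≠ 0 := fun hik => by
    simpa [hcp, not_or] using circuit_ne_zero u hu hik
  have hc : c ≠ 0 := (hne (i := 0) (k := 1) (by simp)).1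
  have hsq : ∀ m : ℕ, (-1 : ℝ) ^ m * (-1) ^ m = 1 := fun m =>
    mul_self_eq_one_iff.mpr (neg_one_pow_eq_or ℝ m)
  have hdet : ∀ (i : Fin (n + 2)) (j : Fin (n + 1)),
      (Matrix.of (u ∘ i.succAbove ∘ j.succAbove)).det =
      (-1) ^ (j : ℕ) * ((-1) ^ (i : ℕ) * c * wedge (p i) (p (i.succAbove j))) := by
    intro i j
    rw [← hcp, circuit_succAbove, ← mul_assoc, hsq, one_mul]
  have hterm : ∀ i : Fin (n + 2), (-1 : ℝ) ^ (i : ℕ) *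
      ∏ j : Fin (n + 1), Real.sign (Matrix.of (u ∘ i.succAbove ∘ j.succAbove)).det =
      (∏ j : Fin (n + 1), (-1 : ℝ) ^ (j : ℕ)) * Real.sign c *
        ∏ j, Real.sign (wedge (p i) (p (i.succAbove j))) := by
    intro i
    have hpow : ((-1 : ℝ) ^ (i : ℕ)) ^ n = 1 := by
      rw [← pow_mul, mul_comm, pow_mul, hn.neg_one_pow, one_pow]
    simp only [hdet, Real.sign_mul, Real.sign_neg_one_pow, prod_mul_distrib,
      prod_const, card_univ, Fintype.card_fin, pow_succ, hpow,
      Real.sign_pow_of_even hc hn]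
    linear_combination (∏ j : Fin (n + 1), (-1 : ℝ) ^ (j : ℕ)) * Real.sign c *
      (∏ j, Real.sign (wedge (p i) (p (i.succAbove j)))) * hsq i
  rw [sum_congr rfl fun i _ => hterm i, ← mul_sum,
    sum_prod_sign_wedge_eq_zero (by simpa [Nat.even_add_one] using hn) p fun _ _ hik => (hne hik).2,
    mul_zero]

lemma eventually_sign_sum_pow_mul_eq {ι : Type*} [Fintype ι] (W : ι → ℕ) (D : ι → ℝ) (m : ι)
    (hm : D m ≠ 0) (hmin : ∀ f, f ≠ m → D f ≠ 0 → W m < W f) :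
    ∀ᶠ ε in nhdsWithin (0 : ℝ) (Set.Ioi 0), Real.sign (∑ f, ε ^ W f * D f) = Real.sign (D m) := by
  let g : ℝ → ℝ := fun ε => ∑ f, ε ^ (W f - W m) * D f
  have hfactor : ∀ ε : ℝ, ∑ f, ε ^ W f * D f = ε ^ W m * g ε := by
    intro ε
    rw [mul_sum]
    refine sum_congr rfl fun f _ => ?_
    rcases eq_or_ne (D f) 0 with hDf | hDf
    · simp [hDf]
    · have hle : W m ≤ W f := by
        rcases eq_or_ne f m with rfl | hfm
        exacts [le_rfl, (hmin f hfm hDf).le]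
      rw [← mul_assoc, ← pow_add, Nat.add_sub_cancel' hle]
  have hg0 : g 0 = D m := by
    refine (sum_eq_single m (fun f _ hfm => ?_) (by simp)).trans (by simp)
    rcases eq_or_ne (D f) 0 with hDf | hDf
    · simp [hDf]
    · simp [Nat.sub_ne_zero_of_lt (hmin f hfm hDf)]
  have hg : Filter.Tendsto g (nhds 0) (nhds (D m)) := by
    rw [← hg0]
    exact (continuous_finsetSum _ fun f _ => (continuous_pow _).mul continuous_const).tendsto 0
  have hsign : ∀ᶠ ε in nhds (0 : ℝ), Real.sign (g ε) = Real.sign (D m) := by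
    rcases hm.lt_or_gt with hneg | hpos
    · filter_upwards [hg.eventually_lt_const hneg] with ε hε
      rw [Real.sign_of_neg hε, Real.sign_of_neg hneg]
    · filter_upwards [hg.eventually_const_lt hpos] with ε hε
      rw [Real.sign_of_pos hε, Real.sign_of_pos hpos]
  filter_upwards [nhdsWithin_le_nhds hsign, self_mem_nhdsWithin] with ε hε hεpos
  rw [hfactor, Real.sign_mul, Real.sign_of_pos (pow_pos hεpos _), one_mul, hε]

open Classical in
lemma extVec_spec {n k : ℕ} (W : Fin k → Fin n → ℝ) (F : Fin n → Fin n → ℝ)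
    (hex : ∃ j, F j ∉ Submodule.span ℝ (Set.range W)) :
    ∃ j, extVec W F = F j ∧ F j ∉ Submodule.span ℝ (Set.range W) ∧
      ∀ j' < j, F j' ∈ Submodule.span ℝ (Set.range W) := by
  rw [extVec, dif_pos hex]
  exact ⟨_, rfl, Fin.find_spec hex, fun j' hj' => not_not.mp (Fin.find_min hex hj')⟩

lemma exists_notMem_span_range {V ι : Type*} [AddCommGroup V] [Module ℝ V] [Fintype ι] {k : ℕ}
    (W : Fin k → V) {F : ι → V} (hF : LinearIndependent ℝ F) (hk : k < Fintype.card ι) :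
    ∃ j, F j ∉ Submodule.span ℝ (Set.range W) := by
  by_contra! h
  have hle : Submodule.span ℝ (Set.range F) ≤ Submodule.span ℝ (Set.range W) :=
    Submodule.span_le.mpr (Set.range_subset_iff.mpr h)
  have := FiniteDimensional.span_of_finite ℝ (Set.finite_range W)
  have hW : Module.finrank ℝ (Submodule.span ℝ (Set.range W)) ≤ k :=
    (finrank_range_le_card (R := ℝ) W).trans_eq (Fintype.card_fin k)
  have := Submodule.finrank_mono hle
  rw [finrank_span_eq_card hF] at this
  omega

lemma exists_bracket_eq_greedy {n : ℕ} : ∀ {k : ℕ} (F : Fin k → Fin n → Fin n → ℝ), k ≤ n →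
    (∀ l, LinearIndependent ℝ (F l)) →
    ∃ m : Fin k → Fin n, bracket F = (fun l => F l (m l)) ∧ LinearIndependent ℝ (bracket F) ∧
      ∀ l, ∀ a < m l, F l a ∈ Submodule.span ℝ (bracket F '' {t | t < l})
  | 0, _, _, _ => ⟨Fin.elim0, funext fun l => l.elim0, linearIndependent_empty_type,
      fun l => l.elim0⟩
  | k + 1, F, hk, hF => by
    obtain ⟨m, hm, hli, hmin⟩ := exists_bracket_eq_greedy (F ∘ Fin.castSucc) (by omega)
      fun l => hF _
    obtain ⟨j, hj, hnot, hjmin⟩ := extVec_spec (bracket (F ∘ Fin.castSucc)) (F (Fin.last k))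
      (exists_notMem_span_range _ (hF (Fin.last k)) (by simpa using hk))
    have hbr : bracket F = Fin.snoc (bracket (F ∘ Fin.castSucc)) (F (Fin.last k) j) := by
      rw [← hj]; rfl
    refine ⟨Fin.snoc m j, ?_, ?_, fun l => Fin.lastCases ?_ (fun t => ?_) l⟩
    · rw [hbr, hm]
      funext l
      refine Fin.lastCases ?_ (fun t => ?_) l <;> simp
    · rw [hbr]
      exact linearIndependent_finSnoc.mpr ⟨hli, hnot⟩
    · intro a ha
      rw [Fin.snoc_last] at ha
      refine Submodule.span_mono ?_ (hjmin a ha)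
      rintro _ ⟨t, rfl⟩
      exact ⟨t.castSucc, Fin.castSucc_lt_last t, by simp [hbr]⟩
    · intro a ha
      rw [Fin.snoc_castSucc] at ha
      refine Submodule.span_mono ?_ (hmin t a ha)
      rintro _ ⟨s, hs, rfl⟩
      exact ⟨s.castSucc, Fin.castSucc_lt_castSucc_iff.mpr hs, by simp [hbr]⟩

lemma oriV_bracket_ne_zero {n : ℕ} (H : Fin n → Fin n → Fin n → ℝ)
    (hH : ∀ k, LinearIndependent ℝ (H k)) : oriV (bracket H) ≠ 0 := by
  obtain ⟨-, -, hli, -⟩ := exists_bracket_eq_greedy H le_rfl hH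
  rw [oriV_eq_sign_det, Ne, Real.sign_eq_zero_iff]
  exact (linearIndependent_iff_det_ne_zero _).mp hli

/-- Compare `f` and the greedy choice `m` at the first index `l₀` where they differ: there
`m l₀ < f l₀`, and `d l₀` outweighs every later discrepancy. -/
lemma sum_val_mul_lt_of_linearIndependent {V : Type*} [AddCommGroup V] [Module ℝ V] {k n : ℕ}
    (H : Fin k → Fin n → V) {m f : Fin k → Fin n}
    (hmin : ∀ l, ∀ a < m l, H l a ∈ Submodule.span ℝ ((fun t => H t (m t)) '' {t | t < l}))
    (hf : LinearIndependent ℝ fun l => H l (f l)) (hfm : f ≠ m) {d : Fin k → ℕ}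
    (hd : ∀ l, n * ∑ l' ∈ Ioi l, d l' < d l) :
    ∑ l, (m l : ℕ) * d l < ∑ l, (f l : ℕ) * d l := by
  have hne : ({l | f l ≠ m l} : Finset (Fin k)).Nonempty := by
    obtain ⟨l, hl⟩ := Function.ne_iff.mp hfm
    exact ⟨l, by simpa using hl⟩
  set l₀ := ({l | f l ≠ m l} : Finset (Fin k)).min' hne
  have hl₀ : f l₀ ≠ m l₀ := by simpa using min'_mem _ hne
  have hagree : ∀ l < l₀, f l = m l := fun l hl => by
    by_contra h
    exact (min'_le _ l (by simpa using h)).not_gt hl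
  have hlt : m l₀ < f l₀ := by
    refine hl₀.symm.lt_or_gt.resolve_right fun hgt => ?_
    have hmem := hmin l₀ (f l₀) hgt
    rw [Set.image_congr (g := fun t => H t (f t)) fun t ht => by rw [hagree t ht]] at hmem
    exact hf.notMem_span_image (lt_irrefl l₀) hmem
  have hfirst : ∀ l ∉ Ici l₀, ((f l : ℕ) - (m l : ℕ) : ℤ) * d l = 0 := fun l hl => by
    simp [hagree l (by simpa using hl)]
  have hlater : ∀ l, -((n : ℤ) * d l) ≤ ((f l : ℕ) - (m l : ℕ) : ℤ) * d l := fun l => by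
    have := (m l).isLt
    nlinarith [(d l).cast_nonneg (α := ℤ)]
  have hdl₀ : ((n : ℤ) * ∑ l ∈ Ioi l₀, (d l : ℤ)) < d l₀ := by exact_mod_cast hd l₀
  have hstep : (d l₀ : ℤ) ≤ ((f l₀ : ℕ) - (m l₀ : ℕ) : ℤ) * d l₀ := by
    have : (m l₀ : ℤ) + 1 ≤ f l₀ := by exact_mod_cast Fin.lt_def.mp hlt
    nlinarith [(d l₀).cast_nonneg (α := ℤ)]
  zify
  rw [← sub_pos, ← sum_sub_distrib]
  simp_rw [← sub_mul]
  rw [← sum_subset (subset_univ _) fun l _ hl => hfirst l hl, ← Ioi_insert, sum_insert (by simp)]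
  have := sum_le_sum fun l (_ : l ∈ Ioi l₀) => hlater l
  rw [sum_neg_distrib, ← mul_sum] at this
  linarith

def perturbedVec {n : ℕ} (ε : ℝ) (d : ℕ) (F : Fin n → Fin n → ℝ) : Fin n → ℝ :=
  ∑ a : Fin n, ε ^ ((a : ℕ) * d) • F a

/-- The lowest-order term in `ε` of the determinant is the greedy choice made by `bracket`. -/
theorem eventually_sign_det_perturbedVec {n : ℕ} (H : Fin n → Fin n → Fin n → ℝ)
    (hH : ∀ k, LinearIndependent ℝ (H k)) (d : Fin n → ℕ) (hd : ∀ k, n * ∑ l ∈ Ioi k, d l < d k) :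
    ∀ᶠ ε in nhdsWithin (0 : ℝ) (Set.Ioi 0),
      Real.sign (Matrix.of fun k => perturbedVec ε (d k) (H k)).det = oriV (bracket H) := by
  obtain ⟨m, hm, hli, hmin⟩ := exists_bracket_eq_greedy H le_rfl hH
  rw [hm] at hli hmin
  rw [hm, oriV_eq_sign_det]
  have hdet : ∀ ε : ℝ, (Matrix.of fun k => perturbedVec ε (d k) (H k)).det =
      ∑ f : Fin n → Fin n, ε ^ (∑ k, (f k : ℕ) * d k) * (Matrix.of fun k => H k (f k)).det := by
    intro ε
    simp only [← prod_pow_eq_pow_sum]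
    exact det_of_sum_smul (fun k (a : Fin n) => ε ^ ((a : ℕ) * d k)) H
  simp only [hdet]
  refine eventually_sign_sum_pow_mul_eq (ι := Fin n → Fin n) (fun f => ∑ k, (f k : ℕ) * d k)
    (fun f => (Matrix.of fun k => H k (f k)).det) m ?_ ?_
  · exact (linearIndependent_iff_det_ne_zero _).mp hli
  · intro f hfm hf
    exact sum_val_mul_lt_of_linearIndependent H hmin
      ((linearIndependent_iff_det_ne_zero _).mpr hf) hfm hd

lemma mul_sum_Ioi_pow_rev_lt {N : ℕ} (b : ℕ) (t : Fin N) :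
    b * ∑ s ∈ Ioi t, (b + 1) ^ (s.rev : ℕ) < (b + 1) ^ (t.rev : ℕ) := by
  have hsum : ∑ s ∈ Ioi t, (b + 1) ^ (s.rev : ℕ) = ∑ e ∈ range t.rev, (b + 1) ^ e := by
    rw [← Nat.Iio_eq_range, ← Fin.map_valEmbedding_Iio, ← Fin.map_revPerm_Ioi, sum_map, sum_map]
    rfl
  rw [hsum, mul_comm, ← geom_sum_mul_add b]
  exact Nat.lt_succ_self _

lemma mul_sum_Ioi_comp_lt {N n b : ℕ} {c : Fin N → ℕ} (hc : ∀ t, b * ∑ s ∈ Ioi t, c s < c t)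
    {σ : Fin n → Fin N} (hσ : StrictMono σ) (k : Fin n) :
    b * ∑ l ∈ Ioi k, c (σ l) < c (σ k) := by
  refine lt_of_le_of_lt (Nat.mul_le_mul_left b ?_) (hc (σ k))
  rw [← sum_image fun x _ y _ h => hσ.injective h]
  refine sum_le_sum_of_subset fun s hs => ?_
  obtain ⟨l, hl, rfl⟩ := mem_image.mp hs
  exact mem_Ioi.mpr (hσ (mem_Ioi.mp hl))

theorem stmt12_general (n : ℕ) (he : Even n)
    (Fs : Fin (n + 2) → (Fin n → (Fin n → ℝ))) (hFs : ∀ i, LinearIndependent ℝ (Fs i)) :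
    ∑ i : Fin (n + 2), (-1 : ℝ) ^ (i : ℕ) * coco (Fs ∘ i.succAbove) = 0 := by
  let c : Fin (n + 2) → ℕ := fun t => (n + 1) ^ (t.rev : ℕ)
  have hgeneric : ∀ᶠ ε in nhdsWithin (0 : ℝ) (Set.Ioi 0), ∀ (i : Fin (n + 2)) (j : Fin (n + 1)),
      Real.sign (Matrix.of fun k => perturbedVec ε (c (i.succAbove (j.succAbove k)))
        (Fs (i.succAbove (j.succAbove k)))).det =
      oriV (bracket (Fs ∘ i.succAbove ∘ j.succAbove)) := by
    simp only [Filter.eventually_all]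
    intro i j
    exact eventually_sign_det_perturbedVec _ (fun k => hFs _) _
      (mul_sum_Ioi_comp_lt (mul_sum_Ioi_pow_rev_lt n)
        ((Fin.strictMono_succAbove i).comp (Fin.strictMono_succAbove j)))
  obtain ⟨ε, hε⟩ := hgeneric.exists
  let u : Fin (n + 2) → Fin n → ℝ := fun t => perturbedVec ε (c t) (Fs t)
  have hcoco : ∀ i : Fin (n + 2), coco (Fs ∘ i.succAbove) =
      ∏ j : Fin (n + 1), Real.sign (Matrix.of (u ∘ i.succAbove ∘ j.succAbove)).det :=
    fun i => prod_congr rfl fun j _ => (hε i j).symm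
  simp only [hcoco]
  refine sum_neg_one_pow_mul_prod_sign_det_eq_zero he u fun i j h => ?_
  have hsign : Real.sign (Matrix.of (u ∘ i.succAbove ∘ j.succAbove)).det =
      oriV (bracket (Fs ∘ i.succAbove ∘ j.succAbove)) := hε i j
  rw [h, Real.sign_zero] at hsign
  exact oriV_bracket_ne_zero _ (fun k => hFs _) hsign.symm

/-- the coboundary of `coco` vanishes identically on `(n+2)`-tuples of
complete oriented flags: `∑_{i=0}^{n+1} (−1)^i coco(F_0,…,F̂_i,…,F_{n+1}) = 0`. -/
theorem stmt12 (n : ℕ) (hn : 0 < n) (he : Even n)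
    (Fs : Fin (n + 2) → (Fin n → (Fin n → ℝ))) (hFs : ∀ i, LinearIndependent ℝ (Fs i)) :
    ∑ i : Fin (n + 2), (-1 : ℝ) ^ (i : ℕ) * coco (Fs ∘ i.succAbove) = 0 :=
  stmt12_general n he Fs hFs

end
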